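/- Let C be a clutter with the König property, without isolated vertices, and without cycles of length 3 or 4, and let g be the covering number of C. Then the following conditions are equivalent: (a) C is unmixed; (b) there is a perfect matching e_1,…,e_g of C (pairwise disjoint edges whose union is the vertex set X) such that each e_i has a free vertex and, for any two edges f_1, f_2 of C and any e_i, one has f_1 ∩ e_i ⊆ f_2 ∩ e_i or f_2 ∩ e_i ⊆ f_1 ∩ e_i; (c) the independence complex Δ_C is pure shellable. -/

import Mathlib

variable {V : Type} [Fintype V] [DecidableEq V]

/-- A clutter: a family of finsets (edges), none of which contains another. -/
def IsClutter (E : Set (Finset V)) : Prop :=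
  ∀ e ∈ E, ∀ f ∈ E, e ⊆ f → e = f

/-- A vertex cover: a set of vertices meeting every edge. -/
def IsVertexCover (E : Set (Finset V)) (C : Finset V) : Prop :=
  ∀ e ∈ E, (e ∩ C).Nonempty

/-- A minimal vertex cover. -/
def IsMinimalVertexCover (E : Set (Finset V)) (C : Finset V) : Prop :=
  IsVertexCover E C ∧ ∀ D ⊂ C, ¬ IsVertexCover E D

/-- The covering number: minimum cardinality of a vertex cover. -/
noncomputable def coveringNumber (E : Set (Finset V)) : ℕ :=
  sInf {n : ℕ | ∃ C : Finset V, IsVertexCover E C ∧ C.card = n}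

/-- Unmixed: all minimal vertex covers have the same cardinality. -/
def Unmixed (E : Set (Finset V)) : Prop :=
  ∀ C D : Finset V, IsMinimalVertexCover E C → IsMinimalVertexCover E D →
    C.card = D.card

/-- A matching: a set of pairwise disjoint edges. -/
def IsMatching (E : Set (Finset V)) (M : Finset (Finset V)) : Prop :=
  ↑M ⊆ E ∧ (M : Set (Finset V)).Pairwise Disjoint

/-- The König property: the maximum size of a matching equals the covering number. -/
def HasKonigProperty (E : Set (Finset V)) : Prop :=
  (∃ M : Finset (Finset V), IsMatching E M ∧ M.card = coveringNumber E) ∧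
  ∀ M : Finset (Finset V), IsMatching E M → M.card ≤ coveringNumber E

/-- A perfect matching of König type: pairwise disjoint edges `em 0, …, em (g-1)`
whose union is the whole vertex set, where `g` is the covering number. -/
def IsPerfectMatchingKT (E : Set (Finset V)) {g : ℕ} (em : Fin g → Finset V) : Prop :=
  (∀ i, em i ∈ E) ∧ (∀ i j, i ≠ j → Disjoint (em i) (em j)) ∧
  (∀ x : V, ∃ i, x ∈ em i) ∧ g = coveringNumber E

/-- An independent set: contains no edge. -/
def IsIndependentSet (E : Set (Finset V)) (F : Finset V) : Prop :=
  ∀ e ∈ E, ¬ e ⊆ F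

/-- A facet of the independence complex: a maximal independent set. -/
def IsFacet (E : Set (Finset V)) (F : Finset V) : Prop :=
  IsIndependentSet E F ∧ ∀ G : Finset V, IsIndependentSet E G → F ⊆ G → F = G

/-- The set of facets of the independence complex of a clutter. -/
def cFacets (E : Set (Finset V)) : Set (Finset V) := {F | IsFacet E F}

/-- `F : Fin s → Finset V` is a shelling order of the family of facets `Fac`. -/
def IsShelling {s : ℕ} (Fac : Set (Finset V)) (F : Fin s → Finset V) : Prop :=
  Function.Injective F ∧ (∀ G : Finset V, G ∈ Fac ↔ ∃ i, F i = G) ∧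
  ∀ i j : Fin s, i < j →
    ∃ v ∈ F j \ F i, ∃ l : Fin s, l < j ∧ F j \ F l = {v}

/-- A family of facets is shellable if it admits a shelling order. -/
def Shellable (Fac : Set (Finset V)) : Prop :=
  ∃ (s : ℕ) (F : Fin s → Finset V), IsShelling Fac F

/-- A family of facets is pure if all its members have the same cardinality. -/
def PureFamily (Fac : Set (Finset V)) : Prop :=
  ∀ F ∈ Fac, ∀ G ∈ Fac, F.card = G.card

/-- Pure shellable: pure and shellable. -/
def PureShellable (Fac : Set (Finset V)) : Prop :=
  PureFamily Fac ∧ Shellable Fac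

/-- A free vertex: a vertex belonging to exactly one edge. -/
def HasFreeVertex (E : Set (Finset V)) : Prop :=
  ∃ x : V, ∃ e ∈ E, x ∈ e ∧ ∀ f ∈ E, x ∈ f → f = e

/-- A cycle of length `r`: `r` distinct vertices and `r` distinct edges such that each
of the vertices lies in exactly two of the edges and each of the edges contains exactly
two of the vertices. -/
def HasCycleOfLength (E : Set (Finset V)) (r : ℕ) : Prop :=
  ∃ (v : Fin r → V) (f : Fin r → Finset V),
    Function.Injective v ∧ Function.Injective f ∧ (∀ j, f j ∈ E) ∧
    (∀ i : Fin r, (Finset.univ.filter (fun j => v i ∈ f j)).card = 2) ∧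
    (∀ j : Fin r, (Finset.univ.filter (fun i => v i ∈ f j)).card = 2)


/-!
König's property gives `g` pairwise disjoint edges `e₁, …, e_g`, `g` the covering number; a vertex
cover of size `g` meets each `eᵢ` exactly once and lies in their union. If the clutter is unmixed,
every vertex lies in some minimal cover (it is not isolated), so the `eᵢ` cover all vertices, and
every facet misses exactly one vertex of each `eᵢ`. Edges with incomparable traces on `eᵢ`, say
`a ∈ f₁ \ f₂` and `b ∈ f₂ \ f₁` in `eᵢ`, would make `(f₁ ∪ f₂ ∪ eᵢ) \ {a, b}` independent (an edge
inside it closes a cycle of length 3 or 4), and a facet containing it misses both `a` and `b`.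
Conversely, if the traces on each `eᵢ` form a chain, every vertex `v` of a minimal cover has an edge
meeting the cover only in `v`, which forces the cover to meet each `eᵢ` once; and the largest trace
of an edge other than `eᵢ` misses a vertex of `eᵢ`, which is then free. Purity is unmixedness read
on complements.

For shellability, the edge sets of the vertices of each `eᵢ` are nested, so ranking vertices by
degree refines inclusion. List the facets by decreasing lexicographic order of the ranks of the
vertices they miss. If `F` comes after `G`, at the first block where they differ `F` misses `c` and
`G` misses `d` of higher rank; every edge through `c` contains `d`, so putting `c` into `F` and
taking `d` out gives an earlier facet `H` with `F \ H = {d}`.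
-/

open Finset Function

section Clutter

variable {α : Type} [DecidableEq α] {E : Set (Finset α)}

theorem hasCycleOfLength_of_mem_iff {r : ℕ} [NeZero r] (hr : 3 ≤ r) (v : Fin r → α)
    (f : Fin r → Finset α) (hf : ∀ j, f j ∈ E) (hvf : ∀ i j, v i ∈ f j ↔ j = i ∨ j = i + 1) :
    HasCycleOfLength E r := by
  have h1 : ∀ i : Fin r, i + 1 ≠ i := by
    intro i h
    refine absurd (add_eq_left.1 h) ?_
    rw [Fin.ext_iff, Fin.val_one', Nat.one_mod_eq_one.2 (by omega)]
    simp
  have h2 : ∀ i : Fin r, i + 1 + 1 ≠ i := by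
    intro i h
    refine absurd (add_eq_left.1 ((add_assoc _ _ _).symm.trans h)) ?_
    rw [Fin.ext_iff, Fin.val_add, Fin.val_one', Nat.one_mod_eq_one.2 (by omega),
      Nat.mod_eq_of_lt (by omega)]
    simp
  refine ⟨v, f, fun i i' hii' => ?_, fun j j' hjj' => ?_, hf, fun i => ?_, fun j => ?_⟩
  · have hi := (hvf i' i).1 (hii' ▸ (hvf i i).2 (Or.inl rfl))
    have hi1 := (hvf i' (i + 1)).1 (hii' ▸ (hvf i (i + 1)).2 (Or.inr rfl))
    rcases hi with rfl | rfl
    · rfl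
    · rcases hi1 with h | h
      exacts [absurd h (h2 i'), add_right_cancel h]
  · have hj := (hvf j j').1 (hjj' ▸ (hvf j j).2 (Or.inl rfl))
    have hj1 := (hvf (j - 1) j').1
      (hjj' ▸ (hvf (j - 1) j).2 (Or.inr (sub_add_cancel j 1).symm))
    rcases hj with rfl | rfl
    · rfl
    · rw [sub_add_cancel] at hj1
      rcases hj1 with h | h
      exacts [absurd (by rw [h, sub_add_cancel]) (h2 j), absurd h (h1 j)]
  · have : univ.filter (fun j => v i ∈ f j) = {i, i + 1} := by ext j; simp [hvf]
    rw [this, card_pair (h1 i).symm]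
  · have : univ.filter (fun i => v i ∈ f j) = {j - 1, j} := by
      ext i
      simp only [hvf, mem_filter, mem_univ, true_and, mem_insert, mem_singleton]
      rw [eq_sub_iff_add_eq]
      tauto
    rw [this, card_pair fun h => h1 (j - 1) (by rw [sub_add_cancel, h])]

theorem hasCycleOfLength_three {A B C : Finset α} {x y z : α} (hA : A ∈ E) (hB : B ∈ E)
    (hC : C ∈ E) (hxA : x ∈ A) (hxB : x ∈ B) (hxC : x ∉ C) (hyB : y ∈ B) (hyC : y ∈ C)
    (hyA : y ∉ A) (hzC : z ∈ C) (hzA : z ∈ A) (hzB : z ∉ B) : HasCycleOfLength E 3 := by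
  refine hasCycleOfLength_of_mem_iff le_rfl ![x, y, z] ![A, B, C]
    (fun j => by fin_cases j <;> assumption) fun i j => ?_
  fin_cases i <;> fin_cases j <;> simp [*]

theorem hasCycleOfLength_four {A B C D : Finset α} {w x y z : α} (hA : A ∈ E) (hB : B ∈ E)
    (hC : C ∈ E) (hD : D ∈ E) (hwA : w ∈ A) (hwB : w ∈ B) (hwC : w ∉ C) (hwD : w ∉ D)
    (hxB : x ∈ B) (hxC : x ∈ C) (hxD : x ∉ D) (hxA : x ∉ A) (hyC : y ∈ C) (hyD : y ∈ D)
    (hyA : y ∉ A) (hyB : y ∉ B) (hzD : z ∈ D) (hzA : z ∈ A) (hzB : z ∉ B) (hzC : z ∉ C) :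
    HasCycleOfLength E 4 := by
  refine hasCycleOfLength_of_mem_iff (by norm_num) ![w, x, y, z] ![A, B, C, D]
    (fun j => by fin_cases j <;> assumption) fun i j => ?_
  fin_cases i <;> fin_cases j <;> simp [*]

theorem IsIndependentSet.notMem_of_erase_subset {F e : Finset α} {x : α}
    (hF : IsIndependentSet E F) (he : e ∈ E) (h : e.erase x ⊆ F) : x ∉ F := fun hx =>
  hF e he fun y hy => by
    by_cases hyx : y = x
    · exact hyx ▸ hx
    · exact h (mem_erase.2 ⟨hyx, hy⟩)

theorem IsVertexCover.exists_isMinimalVertexCover_subset {C : Finset α}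
    (h : IsVertexCover E C) : ∃ D ⊆ C, IsMinimalVertexCover E D := by
  induction C using Finset.strongInduction with
  | _ C ih =>
    by_cases hmin : ∃ D ⊂ C, IsVertexCover E D
    · obtain ⟨D, hDC, hD⟩ := hmin
      obtain ⟨D', hD'D, hD'⟩ := ih D hDC hD
      exact ⟨D', hD'D.trans hDC.subset, hD'⟩
    · exact ⟨C, subset_rfl, h, fun D hDC hD => hmin ⟨D, hDC, hD⟩⟩

theorem IsMinimalVertexCover.exists_inter_eq_singleton {C : Finset α}
    (hC : IsMinimalVertexCover E C) {v : α} (hv : v ∈ C) : ∃ f ∈ E, f ∩ C = {v} := by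
  obtain ⟨f, hf, hfv⟩ : ∃ f ∈ E, ¬ (f ∩ C.erase v).Nonempty := by
    simpa [IsVertexCover] using hC.2 _ (erase_ssubset hv)
  have huniq : ∀ x ∈ f ∩ C, x = v := fun x hx => by
    by_contra hxv
    rw [mem_inter] at hx
    exact hfv ⟨x, mem_inter.2 ⟨hx.1, mem_erase.2 ⟨hxv, hx.2⟩⟩⟩
  obtain ⟨y, hy⟩ := hC.1 f hf
  exact ⟨f, hf, eq_singleton_iff_unique_mem.2 ⟨huniq y hy ▸ hy, huniq⟩⟩

theorem IsMinimalVertexCover.insert_erase {C : Finset α} {c d : α}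
    (hU : Unmixed E) (hC : IsMinimalVertexCover E C) (hc : c ∈ C)
    (hcd : ∀ f ∈ E, c ∈ f → d ∈ f) : IsMinimalVertexCover E (insert d (C.erase c)) := by
  have hcov : IsVertexCover E (insert d (C.erase c)) := by
    intro f hf
    obtain ⟨y, hy⟩ := hC.1 f hf
    rw [mem_inter] at hy
    by_cases hyc : y = c
    · exact ⟨d, mem_inter.2 ⟨hcd f hf (hyc ▸ hy.1), mem_insert_self _ _⟩⟩
    · exact ⟨y, mem_inter.2 ⟨hy.1, mem_insert_of_mem (mem_erase.2 ⟨hyc, hy.2⟩)⟩⟩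
  obtain ⟨D, hDsub, hD⟩ := hcov.exists_isMinimalVertexCover_subset
  have hcard : (insert d (C.erase c)).card ≤ D.card := by
    rw [hU D C hD hC, ← card_erase_add_one hc]
    exact card_insert_le _ _
  rwa [eq_of_subset_of_card_le hDsub hcard] at hD

theorem HasKonigProperty.empty_notMem (h : HasKonigProperty E) : ∅ ∉ E := by
  intro h0
  have hnone : ∀ C, ¬ IsVertexCover E C := fun C hC => by simpa using hC ∅ h0
  have hzero : coveringNumber E = 0 := by simp [coveringNumber, hnone]
  have := h.2 {∅} ⟨by simpa using h0, by simp⟩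
  simp [hzero] at this

theorem HasKonigProperty.exists_matching (h : HasKonigProperty E) :
    ∃ em : Fin (coveringNumber E) → Finset α, (∀ i, em i ∈ E) ∧ Pairwise (Disjoint on em) := by
  obtain ⟨M, ⟨hME, hMd⟩, hcard⟩ := h.1
  let e := (M.equivFinOfCardEq hcard).symm
  exact ⟨fun i => e i, fun i => hME (e i).2,
    fun i j hij => hMd (e i).2 (e j).2 fun h => hij (e.injective (Subtype.ext h))⟩

def IsChainOfTraces (E : Set (Finset α)) (e : Finset α) : Prop :=
  ∀ f₁ ∈ E, ∀ f₂ ∈ E, f₁ ∩ e ⊆ f₂ ∩ e ∨ f₂ ∩ e ⊆ f₁ ∩ e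

theorem IsMinimalVertexCover.card_inter_le_one {C e : Finset α}
    (hC : IsMinimalVertexCover E C) (hchain : IsChainOfTraces E e) : (e ∩ C).card ≤ 1 := by
  choose! w hwE hw using fun v (hv : v ∈ C) => hC.exists_inter_eq_singleton hv
  have hmem : ∀ x ∈ C, x ∈ w x := fun x hx =>
    mem_of_mem_inter_left ((hw x hx).symm ▸ mem_singleton_self x)
  have key : ∀ x ∈ e ∩ C, ∀ y ∈ e ∩ C, w x ∩ e ⊆ w y ∩ e → x = y := by
    intro x hx y hy hsub
    rw [mem_inter] at hx hy
    have : x ∈ w y ∩ C :=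
      mem_inter.2 ⟨mem_of_mem_inter_left (hsub (mem_inter.2 ⟨hmem x hx.2, hx.1⟩)), hx.2⟩
    simpa [hw y hy.2] using this
  refine card_le_one.2 fun x hx y hy => ?_
  rcases hchain _ (hwE x (mem_inter.1 hx).2) _ (hwE y (mem_inter.1 hy).2) with h | h
  exacts [key x hx y hy h, (key y hy x hx h).symm]

theorem mem_of_mem_of_subset_union_sdiff (hclut : IsClutter E) (h3 : ¬ HasCycleOfLength E 3)
    (h4 : ¬ HasCycleOfLength E 4) {f₁ f₂ e h : Finset α} (hf₁ : f₁ ∈ E) (hf₂ : f₂ ∈ E)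
    (he : e ∈ E) (hh : h ∈ E) {a b : α} (ha₁ : a ∈ f₁) (hae : a ∈ e) (ha₂ : a ∉ f₂)
    (hb₂ : b ∈ f₂) (hbe : b ∈ e) (hb₁ : b ∉ f₁) (hsub : h ⊆ (f₁ ∪ f₂ ∪ e) \ {a, b})
    {p : α} (hph : p ∈ h) (hp₁ : p ∈ f₁) : p ∈ e := by
  have hah : a ∉ h := fun ha => by simpa using hsub ha
  have hbh : b ∉ h := fun hb => by simpa using hsub hb
  by_contra hpe
  by_cases hp₂ : p ∈ f₂
  · exact h3 (hasCycleOfLength_three hf₁ he hf₂ ha₁ hae ha₂ hbe hb₂ hb₁ hp₂ hp₁ hpe)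
  obtain ⟨q, hqh, hq₁⟩ := not_subset.1 fun hh₁ => hah (hclut h hh f₁ hf₁ hh₁ ▸ ha₁)
  by_cases hqe : q ∈ e
  · exact h3 (hasCycleOfLength_three hf₁ hh he hp₁ hph hpe hqh hqe hq₁ hae ha₁ hah)
  have hq₂ : q ∈ f₂ := by
    have := hsub hqh
    simp only [mem_sdiff, mem_union] at this
    tauto
  exact h4 (hasCycleOfLength_four hf₁ hh hf₂ he hp₁ hph hp₂ hpe hqh hq₂ hqe hq₁
    hb₂ hbe hb₁ hbh hae ha₁ hah ha₂)

theorem isIndependentSet_union_sdiff_pair (hclut : IsClutter E) (h3 : ¬ HasCycleOfLength E 3)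
    (h4 : ¬ HasCycleOfLength E 4) {f₁ f₂ e : Finset α} (hf₁ : f₁ ∈ E) (hf₂ : f₂ ∈ E)
    (he : e ∈ E) {a b : α} (ha₁ : a ∈ f₁) (hae : a ∈ e) (ha₂ : a ∉ f₂) (hb₂ : b ∈ f₂)
    (hbe : b ∈ e) (hb₁ : b ∉ f₁) : IsIndependentSet E ((f₁ ∪ f₂ ∪ e) \ {a, b}) := by
  intro h hh hsub
  have hsub' : h ⊆ (f₂ ∪ f₁ ∪ e) \ {b, a} := by rwa [union_comm f₂, pair_comm]
  have hah : a ∉ h := fun ha => by simpa using hsub ha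
  obtain ⟨p, hph, hpe⟩ := not_subset.1 fun hhe => hah (hclut h hh e he hhe ▸ hae)
  have hp := hsub hph
  simp only [mem_sdiff, mem_union] at hp
  rcases hp.1 with (hp₁ | hp₂) | hpe'
  · exact hpe (mem_of_mem_of_subset_union_sdiff hclut h3 h4 hf₁ hf₂ he hh ha₁ hae ha₂ hb₂ hbe
      hb₁ hsub hph hp₁)
  · exact hpe (mem_of_mem_of_subset_union_sdiff hclut h3 h4 hf₂ hf₁ he hh hb₂ hbe hb₁ ha₁ hae
      ha₂ hsub' hph hp₂)
  · exact hpe hpe'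

theorem sdiff_insert_erase_of_notMem {s F : Finset α} {c d : α} (hc : c ∉ s) (hd : d ∉ s) :
    s \ insert c (F.erase d) = s \ F := by
  ext x
  by_cases hx : x ∈ s
  · aesop
  · simp [hx]

theorem sdiff_insert_erase_of_sdiff_eq_singleton {s F : Finset α} {c d : α}
    (hsF : s \ F = {c}) (hd : d ∈ s) (hcd : c ≠ d) : s \ insert c (F.erase d) = {d} := by
  ext x
  have hx := congrArg (x ∈ ·) hsF
  simp only [mem_sdiff, mem_singleton, eq_iff_iff] at hx
  simp only [mem_sdiff, mem_insert, mem_erase, mem_singleton]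
  aesop

theorem sdiff_insert_erase_self {F : Finset α} {c d : α} (hd : d ∈ F) (hcd : c ≠ d) :
    F \ insert c (F.erase d) = {d} := by
  ext x
  simp only [mem_sdiff, mem_insert, mem_erase, mem_singleton]
  aesop

/-- When `F` misses exactly one vertex of `em i`, the `i`-th entry is the rank of that vertex. -/
def facetKey {g : ℕ} (em : Fin g → Finset α) (ρ : α → ℕ) (F : Finset α) : Lex (Fin g → ℕ) :=
  toLex fun i => ∑ x ∈ em i \ F, ρ x

section Blocks

variable {g : ℕ} {em : Fin g → Finset α} {C : Finset α} {ρ : α → ℕ}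

theorem card_biUnion_inter (hd : Pairwise (Disjoint on em)) (C : Finset α) :
    (univ.biUnion fun i => em i ∩ C).card = ∑ i, (em i ∩ C).card :=
  card_biUnion fun _ _ _ _ hij => (hd hij).mono inter_subset_left inter_subset_left

theorem card_inter_eq_one_of_card_le (hd : Pairwise (Disjoint on em))
    (hmeet : ∀ i, (em i ∩ C).Nonempty) (hcard : C.card ≤ g) :
    (∀ i, (em i ∩ C).card = 1) ∧ ∀ x ∈ C, ∃ i, x ∈ em i := by
  set T := univ.biUnion fun i => em i ∩ C
  have hTC : T ⊆ C := biUnion_subset.2 fun i _ => inter_subset_right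
  have hpos : ∀ i ∈ univ, 1 ≤ (em i ∩ C).card := fun i _ => card_pos.2 (hmeet i)
  have hsum : ∑ i, (em i ∩ C).card ≤ g := by
    rw [← card_biUnion_inter hd]
    exact (card_le_card hTC).trans hcard
  have hsum_eq : ∑ _i : Fin g, 1 = ∑ i, (em i ∩ C).card :=
    le_antisymm (sum_le_sum hpos) (by simpa using hsum)
  refine ⟨fun i => ((sum_eq_sum_iff_of_le hpos).1 hsum_eq i (mem_univ i)).symm, fun x hx => ?_⟩
  have hCT : C = T := (eq_of_subset_of_card_le hTC (by
    rw [card_biUnion_inter hd, ← hsum_eq]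
    simpa using hcard)).symm
  rw [hCT, mem_biUnion] at hx
  obtain ⟨i, -, hi⟩ := hx
  exact ⟨i, mem_of_mem_inter_left hi⟩

theorem IsMinimalVertexCover.card_eq_of_isChainOfTraces (hE : ∀ i, em i ∈ E)
    (hd : Pairwise (Disjoint on em)) (hperf : ∀ x, ∃ i, x ∈ em i)
    (hchain : ∀ i, IsChainOfTraces E (em i)) (hC : IsMinimalVertexCover E C) : C.card = g := by
  have hone : ∀ i, (em i ∩ C).card = 1 := fun i =>
    le_antisymm (hC.card_inter_le_one (hchain i)) (card_pos.2 (hC.1 _ (hE i)))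
  have hCT : C = univ.biUnion fun i => em i ∩ C := by
    ext x
    simp only [mem_biUnion, mem_univ, true_and, mem_inter]
    exact ⟨fun hx => (hperf x).imp fun i hi => ⟨hi, hx⟩, fun ⟨_, _, hx⟩ => hx⟩
  rw [hCT, card_biUnion_inter hd]
  simp [hone]

theorem unmixed_of_isChainOfTraces (hE : ∀ i, em i ∈ E) (hd : Pairwise (Disjoint on em))
    (hperf : ∀ x, ∃ i, x ∈ em i) (hchain : ∀ i, IsChainOfTraces E (em i)) : Unmixed E :=
  fun _ _ hC hD => (hC.card_eq_of_isChainOfTraces hE hd hperf hchain).trans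
    (hD.card_eq_of_isChainOfTraces hE hd hperf hchain).symm

theorem injOn_facetKey (hperf : ∀ x, ∃ i, x ∈ em i)
    (hmiss : ∀ F, IsFacet E F → ∀ i, ∃ c, em i \ F = {c}) (hρ : Injective ρ) :
    Set.InjOn (facetKey em ρ) (cFacets E) := by
  intro F hF G hG hFG
  have hsdiff : ∀ i, em i \ F = em i \ G := by
    intro i
    obtain ⟨c, hc⟩ := hmiss F hF i
    obtain ⟨d, hd⟩ := hmiss G hG i
    have := congrFun (congrArg ofLex hFG) i
    simp only [facetKey, ofLex_toLex, hc, hd, sum_singleton] at this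
    rw [hc, hd, hρ this]
  ext x
  obtain ⟨i, hi⟩ := hperf x
  exact not_iff_not.1 (by simpa [hi] using congrArg (x ∈ ·) (hsdiff i))

end Blocks

end Clutter

theorem exists_injective_nat_lt_imp_le {β : Type*} [Fintype β] (d : β → ℕ) :
    ∃ ρ : β → ℕ, Injective ρ ∧ ∀ x y, ρ x < ρ y → d x ≤ d y := by
  set n := Fintype.card β
  set ρ : β → ℕ := fun x => d x * n + Fintype.equivFin β x
  have hle : ∀ x y, ρ x ≤ ρ y → d x ≤ d y := by
    intro x y hxy
    by_contra! hlt
    have h1 : (d y + 1) * n ≤ d x * n := Nat.mul_le_mul_right n hlt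
    have h2 := (Fintype.equivFin β y).isLt
    simp only [ρ] at hxy
    nlinarith
  refine ⟨ρ, fun x y hxy => ?_, fun x y hxy => hle x y hxy.le⟩
  have hd : d x = d y := le_antisymm (hle x y hxy.le) (hle y x hxy.ge)
  simp only [ρ, hd, Nat.add_left_cancel_iff] at hxy
  exact (Fintype.equivFin β).injective (Fin.ext hxy)

section FiniteVertexSet

variable {E : Set (Finset V)} {F G C : Finset V}

theorem isIndependentSet_iff_isVertexCover_compl :
    IsIndependentSet E F ↔ IsVertexCover E Fᶜ := by
  simp [IsIndependentSet, IsVertexCover, not_subset, Finset.Nonempty]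

theorem isFacet_iff_isMinimalVertexCover_compl : IsFacet E F ↔ IsMinimalVertexCover E Fᶜ := by
  simp only [IsFacet, IsMinimalVertexCover, isIndependentSet_iff_isVertexCover_compl]
  refine and_congr_right fun _ => ⟨fun hmax D hD hcov => ?_, fun hmin G hcov hFG => ?_⟩
  · have := hmax Dᶜ (by rwa [compl_compl]) (by simpa using compl_subset_compl.2 hD.subset)
    rw [this, compl_compl] at hD
    exact hD.ne rfl
  · by_contra hne
    exact hmin Gᶜ (compl_ssubset_compl.2 (hFG.ssubset_of_ne hne)) hcov

theorem IsMinimalVertexCover.isFacet_compl (hC : IsMinimalVertexCover E C) : IsFacet E Cᶜ := by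
  rwa [isFacet_iff_isMinimalVertexCover_compl, compl_compl]

theorem IsIndependentSet.exists_isFacet_superset (hG : IsIndependentSet E G) :
    ∃ F, G ⊆ F ∧ IsFacet E F := by
  obtain ⟨D, hDG, hD⟩ :=
    (isIndependentSet_iff_isVertexCover_compl.1 hG).exists_isMinimalVertexCover_subset
  exact ⟨Dᶜ, by simpa using compl_subset_compl.2 hDG, hD.isFacet_compl⟩

theorem IsFacet.insert_erase {c d : V} (hU : Unmixed E) (hF : IsFacet E F) (hc : c ∉ F)
    (hcd : c ≠ d) (hdom : ∀ f ∈ E, c ∈ f → d ∈ f) : IsFacet E (insert c (F.erase d)) := by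
  have hcompl : (insert c (F.erase d))ᶜ = insert d (Fᶜ.erase c) := by
    ext x
    simp only [mem_compl, mem_insert, mem_erase]
    by_cases hxc : x = c <;> by_cases hxd : x = d <;> simp_all
  rw [isFacet_iff_isMinimalVertexCover_compl, hcompl]
  exact (isFacet_iff_isMinimalVertexCover_compl.1 hF).insert_erase hU (mem_compl.2 hc) hdom

theorem unmixed_iff_pureFamily : Unmixed E ↔ PureFamily (cFacets E) := by
  have hcard : ∀ F G : Finset V, Fᶜ.card = Gᶜ.card ↔ F.card = G.card := fun F G => by
    rw [card_compl, card_compl]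
    have := card_le_univ F
    have := card_le_univ G
    omega
  refine ⟨fun hU F hF G hG => ?_, fun hP C D hC hD => ?_⟩
  · exact (hcard F G).1 (hU _ _ (isFacet_iff_isMinimalVertexCover_compl.1 hF)
      (isFacet_iff_isMinimalVertexCover_compl.1 hG))
  · simpa using (hcard Cᶜ Dᶜ).2 (hP _ hC.isFacet_compl _ hD.isFacet_compl)

theorem Unmixed.card_le_coveringNumber (hU : Unmixed E) (hempty : ∅ ∉ E)
    (hC : IsMinimalVertexCover E C) : C.card ≤ coveringNumber E := by
  have huniv : IsVertexCover E univ := fun e he => by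
    rw [inter_univ]
    exact nonempty_iff_ne_empty.2 fun h => hempty (h ▸ he)
  obtain ⟨C₀, hC₀, hcard⟩ : ∃ C₀, IsVertexCover E C₀ ∧ C₀.card = coveringNumber E :=
    Nat.sInf_mem (s := {n | ∃ C, IsVertexCover E C ∧ C.card = n}) ⟨_, univ, huniv, rfl⟩
  obtain ⟨D, hDC₀, hD⟩ := hC₀.exists_isMinimalVertexCover_subset
  rw [hU C D hC hD, ← hcard]
  exact card_le_card hDC₀

theorem exists_isMinimalVertexCover_mem (hclut : IsClutter E) {e : Finset V} (he : e ∈ E)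
    {x : V} (hx : x ∈ e) : ∃ C, IsMinimalVertexCover E C ∧ x ∈ C := by
  have hind : IsIndependentSet E (e.erase x) := fun f hf hfe => by
    obtain rfl := hclut f hf e he (hfe.trans (erase_subset x e))
    exact notMem_erase x f (hfe hx)
  obtain ⟨F, hxF, hF⟩ := hind.exists_isFacet_superset
  exact ⟨Fᶜ, isFacet_iff_isMinimalVertexCover_compl.1 hF,
    mem_compl.2 (hF.1.notMem_of_erase_subset he hxF)⟩

theorem isChainOfTraces_of_card_sdiff_le_one (hclut : IsClutter E)
    (h3 : ¬ HasCycleOfLength E 3) (h4 : ¬ HasCycleOfLength E 4) {e : Finset V} (he : e ∈ E)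
    (hfac : ∀ F, IsFacet E F → (e \ F).card ≤ 1) : IsChainOfTraces E e := by
  intro f₁ hf₁ f₂ hf₂
  by_contra! hne
  obtain ⟨a, ha, ha₂⟩ := not_subset.1 hne.1
  obtain ⟨b, hb, hb₁⟩ := not_subset.1 hne.2
  rw [mem_inter] at ha hb
  replace ha₂ : a ∉ f₂ := fun h => ha₂ (mem_inter.2 ⟨h, ha.2⟩)
  replace hb₁ : b ∉ f₁ := fun h => hb₁ (mem_inter.2 ⟨h, hb.2⟩)
  obtain ⟨F, hGF, hF⟩ := (isIndependentSet_union_sdiff_pair hclut h3 h4 hf₁ hf₂ he ha.1 ha.2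
    ha₂ hb.1 hb.2 hb₁).exists_isFacet_superset
  have haF : a ∉ F := hF.1.notMem_of_erase_subset hf₁ fun x hx => hGF (by
    have := mem_erase.1 hx
    simp only [mem_sdiff, mem_union, mem_insert, mem_singleton]
    exact ⟨Or.inl (Or.inl this.2), by rintro (rfl | rfl); exacts [this.1 rfl, hb₁ this.2]⟩)
  have hbF : b ∉ F := hF.1.notMem_of_erase_subset hf₂ fun x hx => hGF (by
    have := mem_erase.1 hx
    simp only [mem_sdiff, mem_union, mem_insert, mem_singleton]
    exact ⟨Or.inl (Or.inr this.2), by rintro (rfl | rfl); exacts [ha₂ this.2, this.1 rfl]⟩)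
  have hab : a = b := card_le_one.1 (hfac F hF) a (mem_sdiff.2 ⟨ha.2, haF⟩) b
    (mem_sdiff.2 ⟨hb.2, hbF⟩)
  exact ha₂ (hab ▸ hb.1)

theorem exists_free_vertex (hclut : IsClutter E) {e : Finset V} (he : e ∈ E) (hne : e.Nonempty)
    (hchain : IsChainOfTraces E e) : ∃ x ∈ e, ∀ f ∈ E, x ∈ f → f = e := by
  by_contra! h
  obtain ⟨x, hx⟩ := hne
  obtain ⟨f₀, hf₀, -, hf₀e⟩ := h x hx
  obtain ⟨f, ⟨hf, hfe⟩, hmax⟩ := Set.exists_max_image {f ∈ E | f ≠ e}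
    (fun f => (f ∩ e).card) (Set.toFinite _) ⟨f₀, hf₀, hf₀e⟩
  refine hfe (hclut e he f hf fun y hy => ?_).symm
  obtain ⟨f', hf', hyf', hf'e⟩ := h y hy
  rcases hchain f' hf' f hf with hsub | hsub
  · exact mem_of_mem_inter_left (hsub (mem_inter.2 ⟨hyf', hy⟩))
  · exact mem_of_mem_inter_left
      ((eq_of_subset_of_card_le hsub (hmax f' ⟨hf', hf'e⟩)).ge (mem_inter.2 ⟨hyf', hy⟩))

theorem forall_mem_imp_mem_of_ncard_le {e : Finset V} (hchain : IsChainOfTraces E e) {x y : V}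
    (hx : x ∈ e) (hy : y ∈ e) (h : {f ∈ E | x ∈ f}.ncard ≤ {f ∈ E | y ∈ f}.ncard) :
    ∀ f ∈ E, x ∈ f → y ∈ f := by
  have htotal : {f ∈ E | x ∈ f} ⊆ {f ∈ E | y ∈ f} ∨ {f ∈ E | y ∈ f} ⊆ {f ∈ E | x ∈ f} := by
    by_contra! hne
    obtain ⟨f₁, ⟨hf₁, hxf₁⟩, hyf₁⟩ := Set.not_subset.1 hne.1
    obtain ⟨f₂, ⟨hf₂, hyf₂⟩, hxf₂⟩ := Set.not_subset.1 hne.2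
    rcases hchain f₁ hf₁ f₂ hf₂ with hsub | hsub
    · exact hxf₂ ⟨hf₂, mem_of_mem_inter_left (hsub (mem_inter.2 ⟨hxf₁, hx⟩))⟩
    · exact hyf₁ ⟨hf₁, mem_of_mem_inter_left (hsub (mem_inter.2 ⟨hyf₂, hy⟩))⟩
  rcases htotal with hsub | hsub
  · exact fun f hf hxf => (hsub ⟨hf, hxf⟩).2
  · exact fun f hf hxf => ((Set.eq_of_subset_of_ncard_le hsub h).ge ⟨hf, hxf⟩).2

theorem shellable_of_exchange {β : Type*} [LinearOrder β] {Fac : Set (Finset V)}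
    (K : Finset V → β) (hK : Set.InjOn K Fac)
    (hex : ∀ F ∈ Fac, ∀ G ∈ Fac, K F < K G →
      ∃ v ∈ F \ G, ∃ H ∈ Fac, K F < K H ∧ F \ H = {v}) :
    Shellable Fac := by
  set S := (Set.toFinite Fac).toFinset.image K
  set e := S.orderEmbOfFin rfl
  have hS : ∀ i, ∃ F ∈ Fac, K F = e i := fun i => by
    have := S.orderEmbOfFin_mem rfl i
    simpa only [S, mem_image, Set.Finite.mem_toFinset] using this
  choose F hF hKF using hS
  have hrange : ∀ G ∈ Fac, ∃ i, F i = G := by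
    intro G hG
    obtain ⟨i, hi⟩ : K G ∈ Set.range e := by
      rw [Finset.range_orderEmbOfFin]
      simpa [S] using ⟨G, hG, rfl⟩
    exact ⟨i, hK (hF i) hG ((hKF i).trans hi)⟩
  refine ⟨S.card, fun i => F i.rev, fun i j hij => ?_, fun G => ?_, fun i j hij => ?_⟩
  · simpa using e.injective ((hKF _).symm.trans ((congrArg K hij).trans (hKF _)))
  · refine ⟨fun hG => ?_, fun ⟨i, hi⟩ => hi ▸ hF _⟩
    obtain ⟨i, rfl⟩ := hrange G hG
    exact ⟨i.rev, by simp⟩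
  · have hlt : K (F j.rev) < K (F i.rev) := by
      rw [hKF, hKF]
      exact e.strictMono (Fin.rev_lt_rev.2 hij)
    obtain ⟨v, hv, H, hH, hKH, hsdiff⟩ := hex _ (hF _) _ (hF _) hlt
    obtain ⟨l, rfl⟩ := hrange H hH
    refine ⟨v, hv, l.rev, ?_, by simpa using hsdiff⟩
    rw [hKF, hKF, e.lt_iff_lt, ← Fin.rev_rev l, Fin.rev_lt_rev] at hKH
    simpa using hKH

section Blocks

variable {g : ℕ} {em : Fin g → Finset V} {ρ : V → ℕ}

theorem card_sdiff_eq_one_of_isFacet (hE : ∀ i, em i ∈ E) (hd : Pairwise (Disjoint on em))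
    (hcard : ∀ C, IsMinimalVertexCover E C → C.card ≤ g) (hF : IsFacet E F) (i : Fin g) :
    (em i \ F).card = 1 := by
  have hC := isFacet_iff_isMinimalVertexCover_compl.1 hF
  rw [sdiff_eq_inter_compl]
  exact (card_inter_eq_one_of_card_le hd (fun j => hC.1 _ (hE j)) (hcard _ hC)).1 i

theorem Unmixed.exists_perfect_matching (hclut : IsClutter E) (hkonig : HasKonigProperty E)
    (hnoiso : ∀ x : V, ∃ e ∈ E, x ∈ e) (h3 : ¬ HasCycleOfLength E 3)
    (h4 : ¬ HasCycleOfLength E 4) (hU : Unmixed E) :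
    ∃ em : Fin (coveringNumber E) → Finset V, (∀ i, em i ∈ E) ∧ Pairwise (Disjoint on em) ∧
      (∀ x, ∃ i, x ∈ em i) ∧ ∀ i, IsChainOfTraces E (em i) := by
  obtain ⟨em, hE, hd⟩ := hkonig.exists_matching
  have hcard := fun C => hU.card_le_coveringNumber (C := C) hkonig.empty_notMem
  refine ⟨em, hE, hd, fun x => ?_, fun i => ?_⟩
  · obtain ⟨e, he, hxe⟩ := hnoiso x
    obtain ⟨C, hC, hxC⟩ := exists_isMinimalVertexCover_mem hclut he hxe
    exact (card_inter_eq_one_of_card_le hd (fun j => hC.1 _ (hE j)) (hcard C hC)).2 x hxC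
  · exact isChainOfTraces_of_card_sdiff_le_one hclut h3 h4 (hE i)
      fun F hF => (card_sdiff_eq_one_of_isFacet hE hd hcard hF i).le

theorem exists_exchange_of_facetKey_lt (hU : Unmixed E) (hd : Pairwise (Disjoint on em))
    (hmiss : ∀ F, IsFacet E F → ∀ i, ∃ c, em i \ F = {c})
    (hρ : ∀ i, ∀ x ∈ em i, ∀ y ∈ em i, ρ x < ρ y → ∀ f ∈ E, x ∈ f → y ∈ f)
    (hF : IsFacet E F) (hG : IsFacet E G) (hlt : facetKey em ρ F < facetKey em ρ G) :
    ∃ v ∈ F \ G, ∃ H, IsFacet E H ∧ facetKey em ρ F < facetKey em ρ H ∧ F \ H = {v} := by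
  obtain ⟨i, -, hi⟩ := hlt
  obtain ⟨c, hc⟩ := hmiss F hF i
  obtain ⟨d, hdG⟩ := hmiss G hG i
  have hρcd : ρ c < ρ d := by simpa [facetKey, hc, hdG] using hi
  have hcd : c ≠ d := fun h => hρcd.ne (congrArg ρ h)
  have hcF := mem_sdiff.1 (hc ▸ mem_singleton_self c)
  have hdG' := mem_sdiff.1 (hdG ▸ mem_singleton_self d)
  have hdF : d ∈ F := by
    by_contra h
    exact hcd (mem_singleton.1 (hc ▸ mem_sdiff.2 ⟨hdG'.1, h⟩)).symm
  refine ⟨d, mem_sdiff.2 ⟨hdF, hdG'.2⟩, _,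
    hF.insert_erase hU hcF.2 hcd (hρ i c hcF.1 d hdG'.1 hρcd), ⟨i, fun j hj => ?_, ?_⟩,
    sdiff_insert_erase_self hdF hcd⟩
  · have hj' : Disjoint (em j) (em i) := hd hj.ne
    simp [facetKey, sdiff_insert_erase_of_notMem (disjoint_right.1 hj' hcF.1)
      (disjoint_right.1 hj' hdG'.1)]
  · simpa [facetKey, hc, sdiff_insert_erase_of_sdiff_eq_singleton hc hdG'.1 hcd] using hρcd

theorem shellable_cFacets (hU : Unmixed E) (hE : ∀ i, em i ∈ E)
    (hd : Pairwise (Disjoint on em)) (hperf : ∀ x, ∃ i, x ∈ em i)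
    (hchain : ∀ i, IsChainOfTraces E (em i)) : Shellable (cFacets E) := by
  have hmiss : ∀ F, IsFacet E F → ∀ i, ∃ c, em i \ F = {c} := fun F hF i =>
    card_eq_one.1 (card_sdiff_eq_one_of_isFacet hE hd
      (fun C hC => (hC.card_eq_of_isChainOfTraces hE hd hperf hchain).le) hF i)
  obtain ⟨ρ, hρ, hρle⟩ := exists_injective_nat_lt_imp_le fun x => {f ∈ E | x ∈ f}.ncard
  refine shellable_of_exchange (facetKey em ρ) (injOn_facetKey hperf hmiss hρ)
    fun F hF G hG hlt => ?_
  obtain ⟨v, hv, H, hH, hKH, hsdiff⟩ := exists_exchange_of_facetKey_lt hU hd hmiss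
    (fun i x hx y hy hxy => forall_mem_imp_mem_of_ncard_le (hchain i) hx hy (hρle x y hxy))
    hF hG hlt
  exact ⟨v, hv, H, hH, hKH, hsdiff⟩

end Blocks

end FiniteVertexSet

/-- For a clutter with the König property, without isolated vertices and
without cycles of length 3 or 4, unmixedness is equivalent to the existence of a perfect
matching of König type whose edges have free vertices and satisfy the ordering condition,
and also equivalent to pure shellability of the independence complex. -/
theorem unmixed_tfae_no_small_cycles
    (E : Set (Finset V)) (hclut : IsClutter E)
    (hkonig : HasKonigProperty E) (hnoiso : ∀ x : V, ∃ e ∈ E, x ∈ e)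
    (h3 : ¬ HasCycleOfLength E 3) (h4 : ¬ HasCycleOfLength E 4) :
    (Unmixed E ↔
      ∃ em : Fin (coveringNumber E) → Finset V,
        (∀ i, em i ∈ E) ∧ (∀ i j, i ≠ j → Disjoint (em i) (em j)) ∧
        (∀ x : V, ∃ i, x ∈ em i) ∧
        (∀ i, ∃ x ∈ em i, ∀ f ∈ E, x ∈ f → f = em i) ∧
        (∀ f₁ ∈ E, ∀ f₂ ∈ E, ∀ i,
          f₁ ∩ em i ⊆ f₂ ∩ em i ∨ f₂ ∩ em i ⊆ f₁ ∩ em i)) ∧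
    (Unmixed E ↔ PureShellable (cFacets E)) := by
  refine ⟨⟨fun hU => ?_, fun ⟨em, hE, hd, hperf, _, hchain⟩ => ?_⟩,
    fun hU => ⟨unmixed_iff_pureFamily.1 hU, ?_⟩, fun h => unmixed_iff_pureFamily.2 h.1⟩
  · obtain ⟨em, hE, hd, hperf, hchain⟩ := hU.exists_perfect_matching hclut hkonig hnoiso h3 h4
    have hne : ∀ i, (em i).Nonempty := fun i =>
      nonempty_iff_ne_empty.2 fun h => hkonig.empty_notMem (h ▸ hE i)
    exact ⟨em, hE, fun i j hij => hd hij, hperf,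
      fun i => exists_free_vertex hclut (hE i) (hne i) (hchain i),
      fun f₁ hf₁ f₂ hf₂ i => hchain i f₁ hf₁ f₂ hf₂⟩
  · exact unmixed_of_isChainOfTraces hE hd hperf fun i f₁ hf₁ f₂ hf₂ => hchain f₁ hf₁ f₂ hf₂ i
  · obtain ⟨em, hE, hd, hperf, hchain⟩ := hU.exists_perfect_matching hclut hkonig hnoiso h3 h4
    exact shellable_cFacets hU hE hd hperf hchain
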